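/- Let r : [0,1] → [0,1] be a continuous nondecreasing function with r(0) = 0 and r(1) = 1, and let r⁻¹ be its inverse (assume r strictly increasing so that r⁻¹ exists). Then ∫₀¹ (r(x) − x)² dx = ∫₀¹ (r⁻¹(x) − x)² dx. In particular, the asymptotic Wasserstein quantile test is symmetric: ∫₀¹ (F(G⁻¹(x)) − x)² dx = ∫₀¹ (G(F⁻¹(x)) − x)² dx for continuous strictly increasing CDFs F, G on a common interval. -/

import Mathlib

/-!
For `t, y ∈ [0,1]` we have `r t < y ↔ t < r⁻¹ y`, so integrating `2t` over this region of the
unit square in both orders (Fubini) gives `∫ (r⁻¹)² = ∫ 2t (1 - r t)`, and symmetrically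
`∫ r² = ∫ 2t (1 - r⁻¹ t)`. Expanding `(f - x)² = f² + 2x(1 - f) + (x² - 2x)` then shows that
`∫ (r - x)² = ∫ 2t (1 - r⁻¹ t) + ∫ 2x (1 - r x) - 2/3`, which is symmetric in `r` and `r⁻¹`.
-/

open intervalIntegral

open Set MeasureTheory

theorem MonotoneOn.integral_sub_id_sq {f : ℝ → ℝ} (hf : MonotoneOn f (Icc 0 1))
    (hf₀ : ∀ x ∈ Icc (0:ℝ) 1, 0 ≤ f x) :
    ∫ x in (0:ℝ)..1, (f x - x) ^ 2
      = (∫ x in (0:ℝ)..1, f x ^ 2) + (∫ x in (0:ℝ)..1, 2 * x * (1 - f x)) - 2 / 3 := by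
  rw [← uIcc_of_le zero_le_one] at hf hf₀
  have h_sq : IntervalIntegrable (fun x => f x ^ 2) volume 0 1 := by
    simp only [sq]
    exact (hf.mul hf hf₀ hf₀).intervalIntegrable
  have h_mul : IntervalIntegrable (fun x => 2 * x * (1 - f x)) volume 0 1 :=
    (intervalIntegrable_const.sub hf.intervalIntegrable).continuousOn_mul
      (continuousOn_const.mul continuousOn_id)
  have h_poly : ∫ x in (0:ℝ)..1, (x ^ 2 - 2 * x) = -2 / 3 := by
    rw [integral_sub (intervalIntegrable_pow 2) (intervalIntegrable_id.const_mul 2),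
      intervalIntegral.integral_const_mul, integral_pow, integral_id]
    norm_num
  rw [integral_congr (g := fun x => (f x ^ 2 + 2 * x * (1 - f x)) + (x ^ 2 - 2 * x))
      fun x _ => by ring,
    integral_add (h_sq.add h_mul)
      ((intervalIntegrable_pow 2).sub (intervalIntegrable_id.const_mul 2)),
    integral_add h_sq h_mul, h_poly]
  ring

theorem StrictMonoOn.strictMonoOn_of_rightInvOn {α β : Type*} [LinearOrder α] [Preorder β]
    {f : α → β} {g : β → α} {s : Set α} {t : Set β}
    (hf : StrictMonoOn f s) (hg : MapsTo g t s) (hfg : RightInvOn g f t) :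
    StrictMonoOn g t := fun x hx y hy hxy =>
  (hf.lt_iff_lt (hg hx) (hg hy)).1 <| by rwa [hfg hx, hfg hy]

theorem setIntegral_Ioc_ite_const_lt_id {c : ℝ} (hc : c ∈ Icc (0:ℝ) 1) (a : ℝ) :
    ∫ y in Ioc (0:ℝ) 1, (if c < y then a else 0) = a * (1 - c) := by
  have h_inter : Ioi c ∩ Ioc 0 1 = Ioc c 1 := by
    ext y
    simp only [mem_inter_iff, mem_Ioi, mem_Ioc]
    exact ⟨fun h => ⟨h.1, h.2.2⟩, fun h => ⟨h.1, hc.1.trans_lt h.1, h.2⟩⟩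
  have h_ind : (fun y => if c < y then a else 0) = (Ioi c).indicator fun _ => a := by
    ext y
    simp [indicator_apply]
  rw [h_ind, MeasureTheory.integral_indicator measurableSet_Ioi,
    Measure.restrict_restrict measurableSet_Ioi,
    h_inter, setIntegral_const, Real.volume_real_Ioc_of_le hc.2, smul_eq_mul, mul_comm]

theorem setIntegral_Ioc_ite_id_lt_const {d : ℝ} (hd : d ∈ Icc (0:ℝ) 1) :
    ∫ t in Ioc (0:ℝ) 1, (if t < d then 2 * t else 0) = d ^ 2 := by
  have h_inter : Iio d ∩ Ioc 0 1 = Ioo 0 d := by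
    ext t
    simp only [mem_inter_iff, mem_Iio, mem_Ioc, mem_Ioo]
    exact ⟨fun h => ⟨h.2.1, h.1⟩, fun h => ⟨h.2, h.1, h.2.le.trans hd.2⟩⟩
  have h_ind : (fun t => if t < d then 2 * t else 0) = (Iio d).indicator fun t => 2 * t := by
    ext t
    simp [indicator_apply]
  rw [h_ind, MeasureTheory.integral_indicator measurableSet_Iio,
    Measure.restrict_restrict measurableSet_Iio, h_inter, ← integral_Ioc_eq_integral_Ioo,
    ← integral_of_le hd.1, intervalIntegral.integral_const_mul, integral_id]
  ring

theorem integral_sq_of_rightInvOn {r s : ℝ → ℝ} (hr : StrictMonoOn r (Icc 0 1))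
    (hr_maps : MapsTo r (Icc 0 1) (Icc 0 1)) (hs_maps : MapsTo s (Icc 0 1) (Icc 0 1))
    (hrs : RightInvOn s r (Icc 0 1)) :
    ∫ y in (0:ℝ)..1, s y ^ 2 = ∫ t in (0:ℝ)..1, 2 * t * (1 - r t) := by
  set μ : Measure ℝ := volume.restrict (Ioc 0 1)
  set R : ℝ → ℝ := IccExtend zero_le_one ((Icc 0 1).domRestrict r)
  have hR_eq : ∀ t ∈ Icc (0:ℝ) 1, R t = r t := fun t ht => IccExtend_of_mem _ _ ht
  have hR_meas : Measurable R :=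
    (Monotone.IccExtend _ (monotoneOn_iff_monotone.1 hr.monotoneOn)).measurable
  set F : ℝ × ℝ → ℝ := fun p => if R p.1 < p.2 then 2 * p.1 else 0
  have hF_int : Integrable F (μ.prod μ) := by
    refine Integrable.of_bound ?_ 2 ?_
    · exact (Measurable.ite (measurableSet_lt (hR_meas.comp measurable_fst) measurable_snd)
        (measurable_fst.const_mul 2) measurable_const).aestronglyMeasurable
    · filter_upwards [Measure.quasiMeasurePreserving_fst.ae (ae_restrict_mem measurableSet_Ioc)]
        with p ⟨hp₀, hp₁⟩
      simp only [F]
      split_ifs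
      · rw [Real.norm_of_nonneg (by linarith)]
        linarith
      · norm_num
  have h_inner_y : ∀ t ∈ Ioc (0:ℝ) 1, ∫ y, F (t, y) ∂μ = 2 * t * (1 - r t) := by
    intro t ht
    rw [← setIntegral_Ioc_ite_const_lt_id (hr_maps (Ioc_subset_Icc_self ht))]
    simp only [F, hR_eq t (Ioc_subset_Icc_self ht)]
    rfl
  have h_inner_t : ∀ y ∈ Ioc (0:ℝ) 1, ∫ t, F (t, y) ∂μ = s y ^ 2 := by
    intro y hy
    have hy' := Ioc_subset_Icc_self hy
    rw [← setIntegral_Ioc_ite_id_lt_const (hs_maps hy')]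
    refine setIntegral_congr_fun measurableSet_Ioc fun t ht => ?_
    have ht' := Ioc_subset_Icc_self ht
    simp only [F, hR_eq t ht', ← hr.lt_iff_lt ht' (hs_maps hy'), hrs hy']
  calc ∫ y in (0:ℝ)..1, s y ^ 2
      = ∫ y, ∫ t, F (t, y) ∂μ ∂μ := by
        rw [integral_of_le zero_le_one]
        exact setIntegral_congr_fun measurableSet_Ioc fun y hy => (h_inner_t y hy).symm
    _ = ∫ t, ∫ y, F (t, y) ∂μ ∂μ := (integral_integral_swap hF_int).symm
    _ = ∫ t in (0:ℝ)..1, 2 * t * (1 - r t) := by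
        rw [integral_of_le zero_le_one]
        exact setIntegral_congr_fun measurableSet_Ioc h_inner_y

/-- Symmetry of the asymptotic WQT: for a continuous strictly increasing bijection
`r : [0,1] → [0,1]` with inverse `rinv`, `∫₀¹ (r x − x)² dx = ∫₀¹ (rinv x − x)² dx`. -/
theorem wqt_symmetric (r rinv : ℝ → ℝ)
    (hrc : ContinuousOn r (Set.Icc 0 1))
    (hrm : StrictMonoOn r (Set.Icc 0 1))
    (hmaps : Set.MapsTo r (Set.Icc 0 1) (Set.Icc 0 1))
    (hr0 : r 0 = 0) (hr1 : r 1 = 1)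
    (hinv1 : ∀ x ∈ Set.Icc (0:ℝ) 1, rinv (r x) = x)
    (hinv2 : ∀ y ∈ Set.Icc (0:ℝ) 1, r (rinv y) = y) :
    ∫ x in (0:ℝ)..1, (r x - x) ^ 2 = ∫ x in (0:ℝ)..1, (rinv x - x) ^ 2 := by
  have hsurj : SurjOn r (Icc 0 1) (Icc 0 1) := by
    have := intermediate_value_Icc zero_le_one hrc
    rwa [hr0, hr1] at this
  have hrinv_maps : MapsTo rinv (Icc 0 1) (Icc 0 1) := LeftInvOn.mapsTo hinv1 hsurj
  have hrinv : StrictMonoOn rinv (Icc 0 1) := hrm.strictMonoOn_of_rightInvOn hrinv_maps hinv2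
  rw [hrm.monotoneOn.integral_sub_id_sq fun x hx => (hmaps hx).1,
    hrinv.monotoneOn.integral_sub_id_sq fun x hx => (hrinv_maps hx).1,
    integral_sq_of_rightInvOn hrm hmaps hrinv_maps hinv2,
    integral_sq_of_rightInvOn hrinv hrinv_maps hmaps hinv1]
  ring
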